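/- arXiv:1612.07652 — 2 statements merged into one kernel-verified Lean document; each statement's English description precedes it below -/
import Mathlib

section
/- Let P and Q be matroids on the same ground set V, and let D = P ∩ Q (the sets independent in both). Then the fractional edge covering number β*(D) equals max(ζ(P), ζ(Q)). -/
open Finset

variable {V : Type*} [Fintype V] [DecidableEq V]

/-- A matroid, given by its collection of independent sets (as a predicate on finsets). -/
def IsMatroid (Indep : Finset V → Prop) : Prop :=
  Indep ∅ ∧ (∀ ⦃I J : Finset V⦄, Indep J → I ⊆ J → Indep I) ∧
    ∀ ⦃I J : Finset V⦄, Indep I → Indep J → I.card < J.card →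
      ∃ x ∈ J, x ∉ I ∧ Indep (insert x I)

/-- Looplessness: every singleton is independent. -/
def Loopless (Indep : Finset V → Prop) : Prop := ∀ v : V, Indep {v}

open scoped Classical in
/-- The rank of a set `S`: maximal size of an independent subset of `S`. -/
noncomputable def rnk (Indep : Finset V → Prop) (S : Finset V) : ℕ :=
  (S.powerset.filter (fun e => Indep e)).sup Finset.card

/-- `ζ(M) = max over nonempty S of |S| / rank(S)`. -/
noncomputable def zeta (Indep : Finset V → Prop) : ℝ :=
  sSup {x : ℝ | ∃ S : Finset V, S.Nonempty ∧ x = (S.card : ℝ) / (rnk Indep S : ℝ)}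

/-- The edge covering number: minimal number of edges of the complex covering `V`. -/
noncomputable def beta (Indep : Finset V → Prop) : ℕ :=
  sInf {k : ℕ | ∃ F : Finset (Finset V), (∀ e ∈ F, Indep e) ∧
    (∀ v : V, ∃ e ∈ F, v ∈ e) ∧ F.card = k}

/-- The fractional edge covering number. -/
noncomputable def betaStar (D : Finset V → Prop) : ℝ :=
  sInf {x : ℝ | ∃ f : Finset V → ℝ, (∀ e, 0 ≤ f e) ∧ (∀ e, f e ≠ 0 → D e) ∧
    (∀ v : V, 1 ≤ ∑ e : Finset V, if v ∈ e then f e else 0) ∧ x = ∑ e : Finset V, f e}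

/-!
The lower bound is double counting: if `f` is a fractional cover by sets independent in `P`, then
`|S| ≤ ∑ₑ |S ∩ e| f(e) ≤ rank_P(S) ∑ₑ f(e)` for every `S`.

For the upper bound, with `k = max(ζ(P), ζ(Q))` the constant vector `1/k` lies in the matroid
intersection polytope `{x ≥ 0 | x(S) ≤ rank_P(S), x(S) ≤ rank_Q(S) for all S}`, and this polytope
is integral (Edmonds). At a vertex `x`, the tight sets of each matroid form a lattice by
submodularity; its atoms are differences of tight sets, so they have integral `x`-sum, and every
atom meeting the fractional support `F` of `x` meets it at least twice. Counting then leaves a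
nonzero direction supported on `F` that keeps every tight set tight, and `x` can move both ways
along it. So `1/k` is a convex combination of indicator vectors of common independent sets
(Krein–Milman, plus finiteness of that set), and `k` times the weights is a fractional cover of
total weight `k`.
-/

open scoped Classical

set_option linter.unusedSectionVars false

section Rank

variable {M : Finset V → Prop} {S I e : Finset V}

lemma card_le_rnk (he : M e) (heS : e ⊆ S) : e.card ≤ rnk M S :=
  Finset.le_sup (f := Finset.card) (by simp [heS, he])

lemma rnk_le_card : rnk M S ≤ S.card :=
  Finset.sup_le fun _ he => Finset.card_le_card (Finset.mem_powerset.mp (Finset.mem_filter.mp he).1)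

lemma rnk_empty : rnk M ∅ = 0 :=
  Nat.eq_zero_of_le_zero (rnk_le_card (S := ∅))

lemma rnk_pos (hl : Loopless M) (hS : S.Nonempty) : 0 < rnk M S := by
  obtain ⟨v, hv⟩ := hS
  exact Nat.one_pos.trans_le
    (by simpa using card_le_rnk (hl v) (Finset.singleton_subset_iff.mpr hv))

lemma exists_indep_card_eq_rnk (hempty : M ∅) (S : Finset V) :
    ∃ I ⊆ S, M I ∧ I.card = rnk M S := by
  obtain ⟨I, hI, hcard⟩ := Finset.exists_mem_eq_sup (S.powerset.filter M)
    ⟨∅, by simp [hempty]⟩ Finset.card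
  rw [Finset.mem_filter, Finset.mem_powerset] at hI
  exact ⟨I, hI.1, hI.2, hcard.symm⟩

lemma indep_of_card_le_rnk (hM : IsMatroid M) (h : e.card ≤ rnk M e) : M e := by
  obtain ⟨I, hIe, hI, hcard⟩ := exists_indep_card_eq_rnk hM.1 e
  rwa [← Finset.eq_of_subset_of_card_le hIe (hcard ▸ h)]

lemma exists_indep_superset_card_eq_rnk (hM : IsMatroid M) (hI : M I) (hIS : I ⊆ S) :
    ∃ J, I ⊆ J ∧ J ⊆ S ∧ M J ∧ J.card = rnk M S := by
  induction h : rnk M S - I.card generalizing I with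
  | zero => exact ⟨I, le_rfl, hIS, hI, le_antisymm (card_le_rnk hI hIS) (by omega)⟩
  | succ n ih =>
    obtain ⟨Y, hYS, hY, hYcard⟩ := exists_indep_card_eq_rnk hM.1 S
    obtain ⟨y, hyY, hyI, hyI'⟩ := hM.2.2 hI hY (by omega)
    obtain ⟨J, hJ⟩ := ih hyI' (Finset.insert_subset (hYS hyY) hIS)
      (by rw [Finset.card_insert_of_notMem hyI]; omega)
    exact ⟨J, (Finset.subset_insert y I).trans hJ.1, hJ.2⟩

lemma rnk_union_add_rnk_inter_le (hM : IsMatroid M) (A B : Finset V) :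
    rnk M (A ∪ B) + rnk M (A ∩ B) ≤ rnk M A + rnk M B := by
  obtain ⟨I, hIAB, hI, hIcard⟩ := exists_indep_card_eq_rnk hM.1 (A ∩ B)
  obtain ⟨J, hIJ, hJ, hJindep, hJcard⟩ :=
    exists_indep_superset_card_eq_rnk hM hI (hIAB.trans Finset.inter_subset_union)
  have hA := card_le_rnk (hM.2.1 hJindep (Finset.inter_subset_left (s₂ := A)))
    Finset.inter_subset_right
  have hB := card_le_rnk (hM.2.1 hJindep (Finset.inter_subset_left (s₂ := B)))
    Finset.inter_subset_right
  have hunion : (J ∩ A) ∪ (J ∩ B) = J := by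
    rw [← Finset.inter_union_distrib_left, Finset.inter_eq_left.mpr hJ]
  have hinter : I ⊆ (J ∩ A) ∩ (J ∩ B) := by
    rw [← Finset.inter_inter_distrib_left]
    exact Finset.subset_inter hIJ hIAB
  have := Finset.card_union_add_card_inter (J ∩ A) (J ∩ B)
  have := Finset.card_le_card hinter
  rw [hunion] at *
  omega

end Rank

section Zeta

variable {M : Finset V → Prop}

lemma bddAbove_card_div_rnk (hl : Loopless M) :
    BddAbove {x : ℝ | ∃ S : Finset V, S.Nonempty ∧ x = (S.card : ℝ) / (rnk M S : ℝ)} := by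
  refine ⟨Fintype.card V, ?_⟩
  rintro _ ⟨S, hS, rfl⟩
  calc (S.card : ℝ) / rnk M S ≤ S.card :=
        div_le_self (Nat.cast_nonneg _) (by exact_mod_cast rnk_pos hl hS)
    _ ≤ Fintype.card V := by exact_mod_cast S.card_le_univ

lemma card_le_zeta_mul_rnk (hl : Loopless M) (S : Finset V) :
    (S.card : ℝ) ≤ zeta M * rnk M S := by
  rcases S.eq_empty_or_nonempty with rfl | hS
  · simp [rnk_empty]
  · have hr : (0 : ℝ) < rnk M S := by exact_mod_cast rnk_pos hl hS
    exact (div_le_iff₀ hr).mp (le_csSup (bddAbove_card_div_rnk hl) ⟨S, hS, rfl⟩)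

lemma zeta_pos [Nonempty V] (hl : Loopless M) : 0 < zeta M := by
  have hV : (Finset.univ : Finset V).Nonempty := Finset.univ_nonempty
  have hr : (0 : ℝ) < rnk M Finset.univ := by exact_mod_cast rnk_pos hl hV
  have hc : (0 : ℝ) < (Finset.univ : Finset V).card := by exact_mod_cast hV.card_pos
  exact (div_pos hc hr).trans_le (le_csSup (bddAbove_card_div_rnk hl) ⟨_, hV, rfl⟩)

lemma zeta_le_of_card_le_mul_rnk [Nonempty V] (hl : Loopless M) {c : ℝ}
    (h : ∀ S : Finset V, S.Nonempty → (S.card : ℝ) ≤ c * rnk M S) : zeta M ≤ c := by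
  refine csSup_le ⟨_, Finset.univ, Finset.univ_nonempty, rfl⟩ ?_
  rintro _ ⟨S, hS, rfl⟩
  exact (div_le_iff₀ (by exact_mod_cast rnk_pos hl hS)).mpr (h S hS)

end Zeta

section FractionalCover

def IsFracCover (D : Finset V → Prop) (f : Finset V → ℝ) : Prop :=
  (∀ e, 0 ≤ f e) ∧ (∀ e, f e ≠ 0 → D e) ∧ ∀ v : V, 1 ≤ ∑ e : Finset V, if v ∈ e then f e else 0

variable {D : Finset V → Prop} {f : Finset V → ℝ}

lemma betaStar_le (hf : IsFracCover D f) : betaStar D ≤ ∑ e, f e := by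
  refine csInf_le ⟨0, ?_⟩ ⟨f, hf.1, hf.2.1, hf.2.2, rfl⟩
  rintro _ ⟨g, hg, -, -, rfl⟩
  exact Finset.sum_nonneg fun e _ => hg e

lemma le_betaStar (hf : IsFracCover D f) {c : ℝ}
    (h : ∀ g, IsFracCover D g → c ≤ ∑ e, g e) : c ≤ betaStar D := by
  refine le_csInf ⟨_, f, hf.1, hf.2.1, hf.2.2, rfl⟩ ?_
  rintro _ ⟨g, hg₀, hgD, hgv, rfl⟩
  exact h g ⟨hg₀, hgD, hgv⟩

lemma zeta_le_sum_of_isFracCover [Nonempty V] {M : Finset V → Prop} (hM : IsMatroid M)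
    (hl : Loopless M) (hDM : ∀ e, D e → M e) (hf : IsFracCover D f) : zeta M ≤ ∑ e, f e := by
  refine zeta_le_of_card_le_mul_rnk hl fun S _ => ?_
  calc (S.card : ℝ) = ∑ _v ∈ S, (1 : ℝ) := by simp
    _ ≤ ∑ v ∈ S, ∑ e, if v ∈ e then f e else 0 := Finset.sum_le_sum fun v _ => hf.2.2 v
    _ = ∑ e, ((S ∩ e).card : ℝ) * f e := by
        rw [Finset.sum_comm]
        refine Finset.sum_congr rfl fun e _ => ?_
        rw [Finset.sum_ite_mem, Finset.sum_const, nsmul_eq_mul]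
    _ ≤ ∑ e, (rnk M S : ℝ) * f e := by
        refine Finset.sum_le_sum fun e _ => ?_
        rcases eq_or_ne (f e) 0 with he | he
        · simp [he]
        · have hSe : M (S ∩ e) := hM.2.1 (hDM e (hf.2.1 e he)) Finset.inter_subset_right
          gcongr
          · exact hf.1 e
          · exact card_le_rnk hSe Finset.inter_subset_left
    _ = (∑ e, f e) * rnk M S := by rw [← Finset.mul_sum, mul_comm]

end FractionalCover

section RankPolytope

variable {M : Finset V → Prop} {x : V → ℝ}

def rankPolytope (M : Finset V → Prop) : Set (V → ℝ) :=
  {x | (∀ v, 0 ≤ x v) ∧ ∀ S : Finset V, ∑ v ∈ S, x v ≤ rnk M S}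

lemma le_one_of_mem_rankPolytope (hx : x ∈ rankPolytope M) (v : V) : x v ≤ 1 := by
  have h := hx.2 {v}
  rw [Finset.sum_singleton] at h
  exact h.trans (by exact_mod_cast rnk_le_card.trans_eq (card_singleton v))

lemma convex_rankPolytope : Convex ℝ (rankPolytope M) := by
  intro x hx y hy a b ha hb hab
  refine ⟨fun v => ?_, fun S => ?_⟩
  · simp only [Pi.add_apply, Pi.smul_apply, smul_eq_mul]
    exact add_nonneg (mul_nonneg ha (hx.1 v)) (mul_nonneg hb (hy.1 v))
  · calc ∑ v ∈ S, (a • x + b • y) v = a * ∑ v ∈ S, x v + b * ∑ v ∈ S, y v := by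
          simp [Finset.sum_add_distrib, Finset.mul_sum]
      _ ≤ a * rnk M S + b * rnk M S := by gcongr; exacts [hx.2 S, hy.2 S]
      _ = rnk M S := by rw [← add_mul, hab, one_mul]

lemma isCompact_rankPolytope : IsCompact (rankPolytope M) := by
  have hclosed : IsClosed (rankPolytope M) := by
    have : rankPolytope M =
        (⋂ v, {x : V → ℝ | 0 ≤ x v}) ∩ ⋂ S : Finset V, {x | ∑ v ∈ S, x v ≤ rnk M S} := by
      ext; simp [rankPolytope]
    rw [this]
    exact (isClosed_iInter fun v => isClosed_le continuous_const (continuous_apply v)).inter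
      (isClosed_iInter fun S => isClosed_le (continuous_finsetSum S fun v _ => continuous_apply v)
        continuous_const)
  exact (isCompact_univ_pi fun _ => isCompact_Icc (a := (0 : ℝ)) (b := 1)).of_isClosed_subset
    hclosed fun x hx v _ => ⟨hx.1 v, le_one_of_mem_rankPolytope hx v⟩

def tightSets (M : Finset V → Prop) (x : V → ℝ) : Set (Finset V) :=
  {S | ∑ v ∈ S, x v = rnk M S}

lemma empty_mem_tightSets : ∅ ∈ tightSets M x := by
  simp [tightSets, rnk_empty]

lemma union_and_inter_mem_tightSets (hM : IsMatroid M) (hx : x ∈ rankPolytope M)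
    {A B : Finset V} (hA : A ∈ tightSets M x) (hB : B ∈ tightSets M x) :
    A ∪ B ∈ tightSets M x ∧ A ∩ B ∈ tightSets M x := by
  have hsub : (rnk M (A ∪ B) : ℝ) + rnk M (A ∩ B) ≤ rnk M A + rnk M B := by
    exact_mod_cast rnk_union_add_rnk_inter_le hM A B
  have hmod := Finset.sum_union_inter (s₁ := A) (s₂ := B) (f := x)
  have h₁ := hx.2 (A ∪ B)
  have h₂ := hx.2 (A ∩ B)
  simp only [tightSets, Set.mem_ofPred_eq] at *
  constructor <;> linarith

lemma supClosed_tightSets (hM : IsMatroid M) (hx : x ∈ rankPolytope M) :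
    SupClosed (tightSets M x) :=
  fun _ hA _ hB => (union_and_inter_mem_tightSets hM hx hA hB).1

lemma infClosed_tightSets (hM : IsMatroid M) (hx : x ∈ rankPolytope M) :
    InfClosed (tightSets M x) :=
  fun _ hA _ hB => (union_and_inter_mem_tightSets hM hx hA hB).2

end RankPolytope

section Atoms

variable {L : Set (Finset V)} {S : Finset V} {v w : V}

noncomputable def atomOf (L : Set (Finset V)) (v : V) : Finset V :=
  {w | ∀ S ∈ L, v ∈ S ↔ w ∈ S}

lemma mem_atomOf_self : v ∈ atomOf L v := by
  simp [atomOf]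

lemma atomOf_eq_of_mem (hw : w ∈ atomOf L v) : atomOf L w = atomOf L v := by
  simp only [atomOf, Finset.mem_filter, Finset.mem_univ, true_and] at hw ⊢
  ext u
  simp only [Finset.mem_filter, Finset.mem_univ, true_and]
  exact forall₂_congr fun S hS => by rw [hw S hS]

lemma atomOf_subset (hS : S ∈ L) (hv : v ∈ S) : atomOf L v ⊆ S := fun w hw => by
  simp only [atomOf, Finset.mem_filter, Finset.mem_univ, true_and] at hw
  exact (hw S hS).mp hv

lemma biUnion_atomOf (hS : S ∈ L) : S.biUnion (atomOf L) = S :=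
  subset_antisymm (Finset.biUnion_subset.mpr fun _ hv => atomOf_subset hS hv)
    fun v hv => Finset.mem_biUnion.mpr ⟨v, hv, mem_atomOf_self⟩

lemma sum_image_atomOf {β : Type*} [AddCommMonoid β] (s : Finset V) (D : V → β) :
    ∑ A ∈ s.image (atomOf L), ∑ v ∈ A, D v = ∑ v ∈ s.biUnion (atomOf L), D v := by
  have hbiUnion : s.biUnion (atomOf L) = (s.image (atomOf L)).biUnion id := by
    rw [Finset.image_biUnion]; rfl
  rw [hbiUnion, Finset.sum_biUnion]
  · rfl
  intro A hA B hB hAB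
  obtain ⟨a, -, rfl⟩ := Finset.mem_image.mp hA
  obtain ⟨b, -, rfl⟩ := Finset.mem_image.mp hB
  refine Finset.disjoint_left.mpr fun u hua hub => hAB ?_
  rw [← atomOf_eq_of_mem hua, ← atomOf_eq_of_mem hub]

lemma exists_least_mem_containing (hinf : InfClosed L) (hS : S ∈ L) (hv : v ∈ S) :
    ∃ A ∈ L, v ∈ A ∧ ∀ T ∈ L, v ∈ T → A ⊆ T := by
  set 𝒜 : Finset (Finset V) := {T | T ∈ L ∧ v ∈ T}
  have h𝒜 : 𝒜.Nonempty := ⟨S, by simp [𝒜, hS, hv]⟩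
  have mem_𝒜 {T : Finset V} : T ∈ 𝒜 ↔ T ∈ L ∧ v ∈ T := by simp [𝒜]
  refine ⟨𝒜.inf' h𝒜 id, hinf.finsetInf'_mem h𝒜 fun T hT => (mem_𝒜.mp hT).1, ?_,
    fun T hT hvT => Finset.inf'_le id (mem_𝒜.mpr ⟨hT, hvT⟩)⟩
  exact Finset.singleton_subset_iff.mp
    (Finset.le_inf' h𝒜 _ fun T hT => Finset.singleton_subset_iff.mpr (mem_𝒜.mp hT).2)

lemma exists_greatest_mem_avoiding (hsup : SupClosed L) (hempty : ∅ ∈ L) (v : V) :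
    ∃ B ∈ L, v ∉ B ∧ ∀ T ∈ L, v ∉ T → T ⊆ B := by
  set ℬ : Finset (Finset V) := {T | T ∈ L ∧ v ∉ T}
  have mem_ℬ {T : Finset V} : T ∈ ℬ ↔ T ∈ L ∧ v ∉ T := by simp [ℬ]
  refine ⟨ℬ.sup id, hsup.finsetSup_mem ⟨∅, mem_ℬ.mpr ⟨hempty, by simp⟩⟩
    fun T hT => (mem_ℬ.mp hT).1, ?_, fun T hT hvT => Finset.le_sup (f := id) (mem_ℬ.mpr ⟨hT, hvT⟩)⟩
  rw [Finset.mem_sup]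
  rintro ⟨T, hT, hvT⟩
  exact (mem_ℬ.mp hT).2 hvT

lemma exists_atomOf_eq_sdiff (hsup : SupClosed L) (hinf : InfClosed L) (hempty : ∅ ∈ L)
    (hS : S ∈ L) (hv : v ∈ S) : ∃ A ∈ L, ∃ B ∈ L, B ⊆ A ∧ atomOf L v = A \ B := by
  obtain ⟨A, hA, hvA, hAmin⟩ := exists_least_mem_containing hinf hS hv
  obtain ⟨B, hB, hvB, hBmax⟩ := exists_greatest_mem_avoiding hsup hempty v
  refine ⟨A, hA, A ∩ B, hinf hA hB, Finset.inter_subset_left, ?_⟩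
  ext w
  simp only [atomOf, Finset.sdiff_inter_self_left, Finset.mem_sdiff, Finset.mem_filter,
    Finset.mem_univ, true_and]
  refine ⟨fun hw => ⟨(hw A hA).mp hvA, fun hwB => hvB ((hw B hB).mpr hwB)⟩,
    fun ⟨hwA, hwB⟩ T hT => ⟨fun hvT => hAmin T hT hvT hwA, fun hwT => ?_⟩⟩
  by_contra hvT
  exact hwB (hBmax T hT hvT hwT)

end Atoms

section CoveredAtoms

variable {L L₁ L₂ : Set (Finset V)} {F S : Finset V} {D : V → ℝ}

noncomputable def coveredAtoms (L : Set (Finset V)) (F : Finset V) : Finset (Finset V) :=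
  ({v ∈ F | ∃ S ∈ L, v ∈ S} : Finset V).image (atomOf L)

lemma sum_eq_zero_of_forall_coveredAtoms (hDF : ∀ v ∉ F, D v = 0)
    (hD : ∀ A ∈ coveredAtoms L F, ∑ v ∈ A, D v = 0) (hS : S ∈ L) : ∑ v ∈ S, D v = 0 := by
  rw [← biUnion_atomOf hS, ← sum_image_atomOf]
  refine Finset.sum_eq_zero fun A hA => ?_
  obtain ⟨w, hw, rfl⟩ := Finset.mem_image.mp hA
  by_cases hmeet : ∃ u ∈ atomOf L w, u ∈ F
  · obtain ⟨u, hu, huF⟩ := hmeet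
    refine hD _ (Finset.mem_image.mpr ⟨u, ?_, atomOf_eq_of_mem hu⟩)
    exact Finset.mem_filter.mpr ⟨huF, S, hS, atomOf_subset hS hw hu⟩
  · exact Finset.sum_eq_zero fun u hu => hDF u fun huF => hmeet ⟨u, hu, huF⟩

lemma sum_coveredAtoms (hcov : ∀ v ∈ F, ∃ S ∈ L, v ∈ S) (hDF : ∀ v ∉ F, D v = 0) :
    ∑ A ∈ coveredAtoms L F, ∑ v ∈ A, D v = ∑ v ∈ F, D v := by
  rw [coveredAtoms, Finset.filter_true_of_mem hcov, sum_image_atomOf]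
  exact (Finset.sum_subset (fun v hv => Finset.mem_biUnion.mpr ⟨v, hv, mem_atomOf_self⟩)
    fun v _ hvF => hDF v hvF).symm

lemma exists_ne_zero_sum_eq_zero (F : Finset V) (𝒞 : Finset (Finset V))
    (h : 𝒞.card < F.card) :
    ∃ D : V → ℝ, D ≠ 0 ∧ (∀ v ∉ F, D v = 0) ∧ ∀ C ∈ 𝒞, ∑ v ∈ C, D v = 0 := by
  have hcard : (𝒞 ∪ Fᶜ.image fun v => ({v} : Finset V)).card < Fintype.card V := by
    have := Finset.card_union_le 𝒞 (Fᶜ.image fun v => ({v} : Finset V))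
    have := Finset.card_image_le (s := Fᶜ) (f := fun v => ({v} : Finset V))
    have := Finset.card_compl_add_card F
    omega
  set 𝒞' := 𝒞 ∪ Fᶜ.image fun v => ({v} : Finset V)
  let φ : (V → ℝ) →ₗ[ℝ] (𝒞' → ℝ) := LinearMap.pi fun C => ∑ v ∈ C.1, LinearMap.proj v
  obtain ⟨D, hDker, hD⟩ := Submodule.ne_bot_iff _ |>.mp <| φ.ker_ne_bot_of_finrank_lt <| by
    simpa using hcard
  have hsum (C : Finset V) (hC : C ∈ 𝒞') : ∑ v ∈ C, D v = 0 := by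
    simpa [φ] using congrFun (LinearMap.mem_ker.mp hDker) ⟨C, hC⟩
  refine ⟨D, hD, fun v hv => ?_, fun C hC => hsum C (Finset.mem_union_left _ hC)⟩
  simpa using hsum {v} (Finset.mem_union_right _ (Finset.mem_image_of_mem _ (by simpa using hv)))

/-- Both atom families partition `F`, so their constraints share the relation `∑_F D = 0`
and one of them can be dropped. -/
lemma exists_ne_zero_sum_coveredAtoms_eq_zero_of_covers (hF : F.Nonempty)
    (hcov₁ : ∀ v ∈ F, ∃ S ∈ L₁, v ∈ S) (hcov₂ : ∀ v ∈ F, ∃ S ∈ L₂, v ∈ S)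
    (hcard : (coveredAtoms L₁ F).card + (coveredAtoms L₂ F).card ≤ F.card) :
    ∃ D : V → ℝ, D ≠ 0 ∧ (∀ v ∉ F, D v = 0) ∧
      (∀ A ∈ coveredAtoms L₁ F, ∑ v ∈ A, D v = 0) ∧ ∀ A ∈ coveredAtoms L₂ F, ∑ v ∈ A, D v = 0 := by
  obtain ⟨u, hu⟩ := hF
  set A₀ := atomOf L₂ u
  have hA₀ : A₀ ∈ coveredAtoms L₂ F :=
    Finset.mem_image_of_mem _ (Finset.mem_filter.mpr ⟨hu, hcov₂ u hu⟩)
  obtain ⟨D, hD, hDF, hDA⟩ := exists_ne_zero_sum_eq_zero F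
    (coveredAtoms L₁ F ∪ (coveredAtoms L₂ F).erase A₀) <| by
      have := Finset.card_union_le (coveredAtoms L₁ F) ((coveredAtoms L₂ F).erase A₀)
      have := Finset.card_erase_of_mem hA₀
      have := Finset.card_pos.mpr ⟨A₀, hA₀⟩
      omega
  have hD₁ : ∀ A ∈ coveredAtoms L₁ F, ∑ v ∈ A, D v = 0 :=
    fun A hA => hDA A (Finset.mem_union_left _ hA)
  refine ⟨D, hD, hDF, hD₁, fun A hA => ?_⟩
  by_cases hAA₀ : A = A₀
  · have hsplit := Finset.add_sum_erase _ (fun A => ∑ v ∈ A, D v) hA₀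
    rw [Finset.sum_eq_zero fun A hA => hDA A (Finset.mem_union_right _ hA), add_zero,
      sum_coveredAtoms hcov₂ hDF, ← sum_coveredAtoms hcov₁ hDF, Finset.sum_eq_zero hD₁] at hsplit
    rw [hAA₀, hsplit]
  · exact hDA A (Finset.mem_union_right _ (Finset.mem_erase.mpr ⟨hAA₀, hA⟩))

lemma exists_ne_zero_sum_coveredAtoms_eq_zero (hF : F.Nonempty)
    (h₁ : 2 * (coveredAtoms L₁ F).card ≤ ({v ∈ F | ∃ S ∈ L₁, v ∈ S} : Finset V).card)
    (h₂ : 2 * (coveredAtoms L₂ F).card ≤ ({v ∈ F | ∃ S ∈ L₂, v ∈ S} : Finset V).card) :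
    ∃ D : V → ℝ, D ≠ 0 ∧ (∀ v ∉ F, D v = 0) ∧
      (∀ A ∈ coveredAtoms L₁ F, ∑ v ∈ A, D v = 0) ∧ ∀ A ∈ coveredAtoms L₂ F, ∑ v ∈ A, D v = 0 := by
  have hc₁ := Finset.card_filter_le F fun v => ∃ S ∈ L₁, v ∈ S
  have hc₂ := Finset.card_filter_le F fun v => ∃ S ∈ L₂, v ∈ S
  by_cases hcov : (∀ v ∈ F, ∃ S ∈ L₁, v ∈ S) ∧ ∀ v ∈ F, ∃ S ∈ L₂, v ∈ S
  · rw [Finset.filter_true_of_mem hcov.1] at h₁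
    rw [Finset.filter_true_of_mem hcov.2] at h₂
    exact exists_ne_zero_sum_coveredAtoms_eq_zero_of_covers hF hcov.1 hcov.2 (by omega)
  · rw [← Finset.card_filter_eq_iff, ← Finset.card_filter_eq_iff] at hcov
    obtain ⟨D, hD, hDF, hDA⟩ := exists_ne_zero_sum_eq_zero F
      (coveredAtoms L₁ F ∪ coveredAtoms L₂ F) <| by
        have := Finset.card_union_le (coveredAtoms L₁ F) (coveredAtoms L₂ F)
        omega
    exact ⟨D, hD, hDF, fun A hA => hDA A (Finset.mem_union_left _ hA),
      fun A hA => hDA A (Finset.mem_union_right _ hA)⟩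

end CoveredAtoms

section Integrality

variable {M P Q : Finset V → Prop} {x : V → ℝ}

-- `⊥ : Subring ℝ` is the image of `ℤ`.
noncomputable def fracSupport (x : V → ℝ) : Finset V :=
  {v | x v ∉ (⊥ : Subring ℝ)}

lemma sum_atomOf_tightSets_mem_bot (hM : IsMatroid M) (hx : x ∈ rankPolytope M) {S : Finset V}
    (hS : S ∈ tightSets M x) {v : V} (hv : v ∈ S) :
    ∑ w ∈ atomOf (tightSets M x) v, x w ∈ (⊥ : Subring ℝ) := by
  obtain ⟨A, hA, B, hB, hBA, hAB⟩ := exists_atomOf_eq_sdiff (supClosed_tightSets hM hx)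
    (infClosed_tightSets hM hx) empty_mem_tightSets hS hv
  rw [hAB, Finset.sum_sdiff_eq_sub hBA, hA, hB]
  exact sub_mem (natCast_mem _ _) (natCast_mem _ _)

lemma exists_ne_mem_atomOf_fracSupport (hM : IsMatroid M) (hx : x ∈ rankPolytope M)
    {S : Finset V} (hS : S ∈ tightSets M x) {v : V} (hv : v ∈ S) (hvF : v ∈ fracSupport x) :
    ∃ w ∈ atomOf (tightSets M x) v, w ∈ fracSupport x ∧ w ≠ v := by
  by_contra! honly
  have hrest : ∑ w ∈ (atomOf (tightSets M x) v).erase v, x w ∈ (⊥ : Subring ℝ) :=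
    Subring.sum_mem _ fun w hw => by
      have hwv := Finset.ne_of_mem_erase hw
      simpa [fracSupport] using mt (honly w (Finset.mem_of_mem_erase hw)) hwv
  have hsplit := Finset.add_sum_erase _ x (mem_atomOf_self (L := tightSets M x) (v := v))
  simp only [fracSupport, Finset.mem_filter, Finset.mem_univ, true_and] at hvF
  exact hvF (eq_sub_of_add_eq hsplit ▸ sub_mem (sum_atomOf_tightSets_mem_bot hM hx hS hv) hrest)

lemma two_mul_card_coveredAtoms_le (hM : IsMatroid M) (hx : x ∈ rankPolytope M) :
    2 * (coveredAtoms (tightSets M x) (fracSupport x)).card ≤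
      ({v ∈ fracSupport x | ∃ S ∈ tightSets M x, v ∈ S} : Finset V).card := by
  refine Finset.mul_card_image_le_card _ 2 fun A hA => ?_
  obtain ⟨v, hv, rfl⟩ := Finset.mem_image.mp hA
  obtain ⟨hvF, S, hS, hvS⟩ := Finset.mem_filter.mp hv
  obtain ⟨w, hw, hwF, hwv⟩ := exists_ne_mem_atomOf_fracSupport hM hx hS hvS hvF
  refine Finset.one_lt_card.mpr ⟨v, ?_, w, ?_, hwv.symm⟩
  · exact Finset.mem_filter.mpr ⟨hv, rfl⟩
  · exact Finset.mem_filter.mpr ⟨Finset.mem_filter.mpr ⟨hwF, S, hS, atomOf_subset hS hvS hw⟩,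
      atomOf_eq_of_mem hw⟩

lemma tendsto_add_mul (a b : ℝ) : Filter.Tendsto (fun c => a + c * b) (nhds 0) (nhds a) :=
  (by fun_prop : Continuous fun c : ℝ => a + c * b).tendsto' 0 a (by simp)

lemma eventually_add_smul_mem_rankPolytope (hx : x ∈ rankPolytope M) {D : V → ℝ}
    (hD₀ : ∀ v, x v = 0 → D v = 0) (hDS : ∀ S ∈ tightSets M x, ∑ v ∈ S, D v = 0) :
    ∀ᶠ c in nhds (0 : ℝ), x + c • D ∈ rankPolytope M := by
  simp only [rankPolytope, Set.mem_ofPred_eq, Pi.add_apply, Pi.smul_apply, smul_eq_mul,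
    Finset.sum_add_distrib, ← Finset.mul_sum]
  refine (Filter.eventually_all.mpr fun v => ?_).and (Filter.eventually_all.mpr fun S => ?_)
  · rcases (hx.1 v).eq_or_lt with hv | hv
    · exact Filter.Eventually.of_forall fun c => by simp [← hv, hD₀ v hv.symm]
    · exact ((tendsto_add_mul _ _).eventually (lt_mem_nhds hv)).mono fun c => le_of_lt
  · by_cases hS : S ∈ tightSets M x
    · exact Filter.Eventually.of_forall fun c => by rw [hDS S hS, mul_zero, add_zero]; exact hx.2 S
    · exact ((tendsto_add_mul _ _).eventually
        (gt_mem_nhds ((hx.2 S).lt_of_ne hS))).mono fun c => le_of_lt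

end Integrality

section Polytope

variable {M P Q : Finset V → Prop} {x : V → ℝ}

def indicatorVectors (D : Finset V → Prop) : Set (V → ℝ) :=
  (fun e : Finset V => (e : Set V).indicator 1) '' {e | D e}

lemma fracSupport_eq_empty_of_mem_extremePoints (hP : IsMatroid P) (hQ : IsMatroid Q)
    (hx : x ∈ (rankPolytope P ∩ rankPolytope Q).extremePoints ℝ) : fracSupport x = ∅ := by
  obtain ⟨⟨hxP, hxQ⟩, hext⟩ := hx
  by_contra hF
  obtain ⟨D, hD, hDF, hDP, hDQ⟩ := exists_ne_zero_sum_coveredAtoms_eq_zero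
    (Finset.nonempty_iff_ne_empty.mpr hF) (two_mul_card_coveredAtoms_le hP hxP)
    (two_mul_card_coveredAtoms_le hQ hxQ)
  have hD₀ (v : V) (hv : x v = 0) : D v = 0 := hDF v (by simp [fracSupport, hv])
  obtain ⟨ε, hε, hball⟩ := Metric.eventually_nhds_iff.mp
    ((eventually_add_smul_mem_rankPolytope hxP hD₀
      fun _ => sum_eq_zero_of_forall_coveredAtoms hDF hDP).and
    (eventually_add_smul_mem_rankPolytope hxQ hD₀
      fun _ => sum_eq_zero_of_forall_coveredAtoms hDF hDQ))
  have hmem (c : ℝ) (hc : |c| < ε) : x + c • D ∈ rankPolytope P ∩ rankPolytope Q :=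
    hball (by simpa using hc)
  have hε2 : |ε / 2| < ε := by rw [abs_of_pos (half_pos hε)]; linarith
  have hseg : x ∈ openSegment ℝ (x + (ε / 2) • D) (x + (-(ε / 2)) • D) :=
    ⟨1 / 2, 1 / 2, by norm_num, by norm_num, by norm_num, by module⟩
  have hmid := hext (hmem _ hε2) (hmem _ ((abs_neg (ε / 2)).trans_lt hε2)) hseg
  rw [add_eq_left, smul_eq_zero] at hmid
  exact hmid.elim (fun h => hε.ne' (by linarith)) hD

lemma eq_zero_or_eq_one_of_mem_bot {r : ℝ} (hr : r ∈ (⊥ : Subring ℝ)) (h0 : 0 ≤ r) (h1 : r ≤ 1) :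
    r = 0 ∨ r = 1 := by
  obtain ⟨n, rfl⟩ := Subring.mem_bot.mp hr
  have : (0 : ℤ) ≤ n := by exact_mod_cast h0
  have : n ≤ 1 := by exact_mod_cast h1
  obtain rfl | rfl : n = 0 ∨ n = 1 := by omega
  all_goals simp

lemma mem_indicatorVectors_of_fracSupport_eq_empty (hP : IsMatroid P) (hQ : IsMatroid Q)
    (hx : x ∈ rankPolytope P ∩ rankPolytope Q) (hF : fracSupport x = ∅) :
    x ∈ indicatorVectors fun e => P e ∧ Q e := by
  have h01 (v : V) : x v = 0 ∨ x v = 1 :=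
    eq_zero_or_eq_one_of_mem_bot
      (by simpa [fracSupport] using Finset.eq_empty_iff_forall_notMem.mp hF v)
      (hx.1.1 v) (le_one_of_mem_rankPolytope hx.1 v)
  set e : Finset V := {v | x v = 1}
  have hsum : ∑ v ∈ e, x v = e.card := by
    rw [Finset.sum_congr rfl fun v hv => (Finset.mem_filter.mp hv).2, Finset.sum_const,
      nsmul_one]
  have hindep {M : Finset V → Prop} (hM : IsMatroid M) (hxM : x ∈ rankPolytope M) : M e :=
    indep_of_card_le_rnk hM (by exact_mod_cast hsum ▸ hxM.2 e)
  refine ⟨e, ⟨hindep hP hx.1, hindep hQ hx.2⟩, funext fun v => ?_⟩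
  rcases h01 v with hv | hv <;> simp [e, hv]

lemma rankPolytope_inter_subset_convexHull (hP : IsMatroid P) (hQ : IsMatroid Q) :
    rankPolytope P ∩ rankPolytope Q ⊆
      convexHull ℝ (indicatorVectors fun e => P e ∧ Q e) := by
  set K := rankPolytope P ∩ rankPolytope Q
  have hK : IsCompact K := isCompact_rankPolytope.inter_right isCompact_rankPolytope.isClosed
  calc K = closure (convexHull ℝ (K.extremePoints ℝ)) :=
        (closure_convexHull_extremePoints hK (convex_rankPolytope.inter convex_rankPolytope)).symm
    _ ⊆ closure (convexHull ℝ _) := closure_mono <| convexHull_mono fun x hx =>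
        mem_indicatorVectors_of_fracSupport_eq_empty hP hQ hx.1
          (fracSupport_eq_empty_of_mem_extremePoints hP hQ hx)
    _ = _ := ((Set.toFinite _).image _ |>.isClosed_convexHull ℝ).closure_eq

lemma inv_mem_rankPolytope (hl : Loopless M) {k : ℝ} (hk : 0 < k) (hζ : zeta M ≤ k) :
    (fun _ => k⁻¹) ∈ rankPolytope M := by
  refine ⟨fun _ => inv_nonneg.mpr hk.le, fun S => ?_⟩
  rw [Finset.sum_const, nsmul_eq_mul, ← div_eq_mul_inv, div_le_iff₀ hk, mul_comm]
  exact (card_le_zeta_mul_rnk hl S).trans (by gcongr)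

lemma exists_isFracCover_of_const_mem_convexHull {D : Finset V → Prop} {k : ℝ} (hk : 0 < k)
    (h : (fun _ => k⁻¹) ∈ convexHull ℝ (indicatorVectors D)) :
    ∃ f, IsFracCover D f ∧ ∑ e, f e = k := by
  set ind := fun e : Finset V => ((e : Set V).indicator 1 : V → ℝ)
  set 𝒟 : Finset (Finset V) := {e | D e}
  have hind : Set.InjOn ind 𝒟 := fun e _ e' _ h => Finset.coe_inj.mp (Set.indicator_one_inj ℝ h)
  rw [show indicatorVectors D = ↑(𝒟.image ind) by simp [indicatorVectors, ind, 𝒟]] at h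
  obtain ⟨w, hw₀, hw₁, hwx⟩ := Finset.mem_convexHull'.mp h
  rw [Finset.sum_image hind] at hw₁ hwx
  refine ⟨fun e => if D e then k * w (ind e) else 0, ⟨fun e => ?_, fun e he => ?_, fun v => ?_⟩, ?_⟩
  · dsimp only
    split_ifs with he
    exacts [mul_nonneg hk.le (hw₀ _ (Finset.mem_image_of_mem _ (by simpa [𝒟]))), le_rfl]
  · by_contra hDe
    exact he (if_neg hDe)
  · refine le_of_eq ?_
    have hv : ∑ e ∈ 𝒟, w (ind e) * ind e v = k⁻¹ := by
      simpa [Finset.sum_apply] using congrFun hwx v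
    rw [← mul_inv_cancel₀ hk.ne', ← hv, Finset.mul_sum, Finset.sum_filter]
    refine Finset.sum_congr rfl fun e _ => ?_
    by_cases hDe : D e <;> by_cases hve : v ∈ e <;> simp [ind, hDe, hve]
  · rw [← Finset.sum_filter, ← Finset.mul_sum, hw₁, mul_one]

end Polytope

/-- The fractional covering number of the intersection of two matroids equals
`max(ζ(P), ζ(Q))`. -/
theorem stmt3 [Nonempty V] (P Q : Finset V → Prop)
    (hP : IsMatroid P) (hQ : IsMatroid Q)
    (hPl : Loopless P) (hQl : Loopless Q) :
    betaStar (fun e => P e ∧ Q e) = max (zeta P) (zeta Q) := by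
  set k := max (zeta P) (zeta Q)
  have hk : 0 < k := (zeta_pos hPl).trans_le (le_max_left _ _)
  have hx : (fun _ => k⁻¹) ∈ rankPolytope P ∩ rankPolytope Q :=
    ⟨inv_mem_rankPolytope hPl hk (le_max_left _ _), inv_mem_rankPolytope hQl hk (le_max_right _ _)⟩
  obtain ⟨f, hf, hfk⟩ :=
    exists_isFracCover_of_const_mem_convexHull hk (rankPolytope_inter_subset_convexHull hP hQ hx)
  refine le_antisymm (hfk ▸ betaStar_le hf) (le_betaStar hf fun g hg => max_le ?_ ?_)
  · exact zeta_le_sum_of_isFracCover hP hPl (fun e he => he.1) hg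
  · exact zeta_le_sum_of_isFracCover hQ hQl (fun e he => he.2) hg
end

section
/- Let M be a loopless matroid with |V(M)| = n and ζ(M) = ζ, and let g be a positive integer with g ≤ n/ζ. Let M^g be the truncation of M to sets of size at most g. Then ζ(M^g) = n/g. -/
open Finset

variable {V : Type*} [Fintype V] [DecidableEq V]

set_option linter.unusedSectionVars false

lemma rnk_le_of (Indep : Finset V → Prop) {S : Finset V} {k : ℕ}
    (h : ∀ I ⊆ S, Indep I → I.card ≤ k) : rnk Indep S ≤ k := by
  classical
  refine Finset.sup_le fun e he => ?_
  rw [Finset.mem_filter, Finset.mem_powerset] at he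
  exact h e he.1 he.2

lemma rnk_le_card' (Indep : Finset V → Prop) (S : Finset V) : rnk Indep S ≤ S.card :=
  rnk_le_of Indep fun I hIS _ => Finset.card_le_card hIS

lemma le_rnk' (Indep : Finset V → Prop) {I S : Finset V} (hIS : I ⊆ S) (hI : Indep I) :
    I.card ≤ rnk Indep S := by
  classical
  exact Finset.le_sup (by rw [Finset.mem_filter, Finset.mem_powerset]; exact ⟨hIS, hI⟩)

lemma exists_rnk' (Indep : Finset V → Prop) (h0 : Indep ∅) (S : Finset V) :
    ∃ I, I ⊆ S ∧ Indep I ∧ I.card = rnk Indep S := by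
  classical
  have hne : (S.powerset.filter (fun e => Indep e)).Nonempty :=
    ⟨∅, by simp [h0]⟩
  obtain ⟨I, hI, hIc⟩ := Finset.exists_mem_eq_sup _ hne Finset.card
  rw [Finset.mem_filter, Finset.mem_powerset] at hI
  exact ⟨I, hI.1, hI.2, hIc.symm⟩

lemma one_le_rnk' (Indep : Finset V → Prop) (hL : Loopless Indep) {S : Finset V}
    (hS : S.Nonempty) : 1 ≤ rnk Indep S := by
  obtain ⟨v, hv⟩ := hS
  have := le_rnk' Indep (I := {v}) (by simpa using hv) (hL v)
  simpa using this

lemma rnk_trunc (Indep : Finset V → Prop) (hM : IsMatroid Indep) (g : ℕ) (S : Finset V) :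
    rnk (fun e => Indep e ∧ e.card ≤ g) S = min (rnk Indep S) g := by
  classical
  apply le_antisymm
  · exact rnk_le_of _ fun I hIS hI => le_min (le_rnk' Indep hIS hI.1) hI.2
  · obtain ⟨I, hIS, hI, hIc⟩ := exists_rnk' Indep hM.1 S
    obtain ⟨J, hJI, hJc⟩ := Finset.exists_subset_card_eq (s := I) (n := min (rnk Indep S) g)
      (by rw [hIc]; exact min_le_left _ _)
    calc min (rnk Indep S) g = J.card := hJc.symm
      _ ≤ _ := le_rnk' _ (hJI.trans hIS) ⟨hM.2.1 hI hJI, hJc.le.trans (min_le_right _ _)⟩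

lemma zeta_bddAbove (Indep : Finset V → Prop) :
    BddAbove {x : ℝ | ∃ S : Finset V, S.Nonempty ∧ x = (S.card : ℝ) / (rnk Indep S : ℝ)} := by
  refine Set.Finite.bddAbove (Set.Finite.subset
    (Set.finite_range fun S : Finset V => (S.card : ℝ) / (rnk Indep S : ℝ)) ?_)
  rintro x ⟨S, _, rfl⟩
  exact ⟨S, rfl⟩

/-- The `ζ` of the truncation of a matroid `M` to sets of size at most `g` is `n/g`,
provided `g ≤ n/ζ(M)`. -/
theorem stmt5 (Indep : Finset V → Prop) (hM : IsMatroid Indep) (hL : Loopless Indep)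
    (g : ℕ) (hg : 1 ≤ g) (hgn : (g : ℝ) ≤ (Fintype.card V : ℝ) / zeta Indep) :
    zeta (fun e => Indep e ∧ e.card ≤ g) = (Fintype.card V : ℝ) / g := by
  have hgR : (0:ℝ) < g := by exact_mod_cast hg
  cases isEmpty_or_nonempty V with
  | inl h =>
    exfalso
    have hz : zeta Indep = 0 := by
      unfold zeta
      convert Real.sSup_empty using 2
      ext x
      simp only [Set.mem_setOf_eq, Set.mem_empty_iff_false, iff_false, not_exists]
      rintro S ⟨⟨v, -⟩, -⟩
      exact h.elim v
    rw [hz, div_zero] at hgn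
    linarith
  | inr h =>
    have hn1 : 0 < Fintype.card V := Fintype.card_pos
    have hnR : (0:ℝ) < Fintype.card V := by exact_mod_cast hn1
    set r := rnk Indep Finset.univ with hrdef
    have hr1 : 1 ≤ r := one_le_rnk' Indep hL Finset.univ_nonempty
    have hrR : (0:ℝ) < r := by exact_mod_cast hr1
    have hmem : ((Fintype.card V : ℝ) / r) ∈
        {x : ℝ | ∃ S : Finset V, S.Nonempty ∧ x = (S.card : ℝ) / (rnk Indep S : ℝ)} :=
      ⟨Finset.univ, Finset.univ_nonempty, by rw [Finset.card_univ]⟩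
    have hzge : (Fintype.card V : ℝ) / r ≤ zeta Indep := le_csSup (zeta_bddAbove Indep) hmem
    have hzpos : 0 < zeta Indep := lt_of_lt_of_le (div_pos hnR hrR) hzge
    have hgz : (g : ℝ) * zeta Indep ≤ Fintype.card V := (le_div_iff₀ hzpos).mp hgn
    have hzle : zeta Indep ≤ (Fintype.card V : ℝ) / g := by
      rw [le_div_iff₀ hgR]; linarith
    have hgr : (g : ℝ) ≤ r := by
      have h1 : (Fintype.card V : ℝ) / r ≤ (Fintype.card V : ℝ) / g := hzge.trans hzle
      have h2 : (Fintype.card V : ℝ) * g ≤ (Fintype.card V : ℝ) * r :=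
        (div_le_div_iff₀ hrR hgR).mp h1
      exact le_of_mul_le_mul_left h2 hnR
    have hgrN : g ≤ r := by exact_mod_cast hgr
    have hTuniv : rnk (fun e => Indep e ∧ e.card ≤ g) Finset.univ = g := by
      rw [rnk_trunc Indep hM g, ← hrdef, min_eq_right hgrN]
    have hmem' : ((Fintype.card V : ℝ) / g) ∈
        {x : ℝ | ∃ S : Finset V, S.Nonempty ∧
          x = (S.card : ℝ) / (rnk (fun e => Indep e ∧ e.card ≤ g) S : ℝ)} :=
      ⟨Finset.univ, Finset.univ_nonempty, by rw [Finset.card_univ, hTuniv]⟩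
    apply le_antisymm
    · refine csSup_le ⟨_, hmem'⟩ ?_
      rintro x ⟨S, hS, rfl⟩
      rw [rnk_trunc Indep hM g S]
      rcases le_total (rnk Indep S) g with h1 | h2
      · rw [min_eq_left h1]
        exact (le_csSup (zeta_bddAbove Indep) ⟨S, hS, rfl⟩).trans hzle
      · rw [min_eq_right h2]
        have : (S.card : ℝ) ≤ Fintype.card V := by
          exact_mod_cast (Finset.card_le_univ S).trans_eq Finset.card_univ
        gcongr
    · exact le_csSup (zeta_bddAbove _) hmem'
end
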